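/- Let V and W be real normed spaces, B : V × W → ℝ a bounded bilinear form, and Π : V → V a bounded linear map with operator-norm bound C > 0 such that B(Πv, ρ) = B(v, ρ) for all v ∈ V and ρ ∈ W. If there is C₀ > 0 such that for every ρ ∈ W there exists ṽ ∈ V with ṽ ≠ 0 and B(ṽ, ρ) ≥ C₀ ‖ṽ‖ ‖ρ‖, then for every ρ ∈ W with ρ ≠ 0, sup over nonzero v in the range of Π of B(v,ρ)/‖v‖ is at least (C₀/C) ‖ρ‖. -/
import Mathlib


/-- Abstract Fortin-operator argument: a continuous inf-sup condition for a bounded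
bilinear form `B`, together with a bounded linear operator `Π` preserving `B` in its
first argument, yields the discrete inf-sup condition over the range of `Π` with
constant `C₀/C`. -/
theorem stmt_9 {V W : Type*} [NormedAddCommGroup V] [NormedSpace ℝ V]
    [NormedAddCommGroup W] [NormedSpace ℝ W]
    (B : V →ₗ[ℝ] W →ₗ[ℝ] ℝ) (M : ℝ) (hB : ∀ v w, |B v w| ≤ M * ‖v‖ * ‖w‖)
    (Pi : V →ₗ[ℝ] V) (C : ℝ) (hC : 0 < C) (hPi : ∀ v, ‖Pi v‖ ≤ C * ‖v‖)
    (hcomm : ∀ v ρ, B (Pi v) ρ = B v ρ)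
    (C₀ : ℝ) (hC₀ : 0 < C₀)
    (hinfsup : ∀ ρ : W, ∃ v : V, v ≠ 0 ∧ C₀ * ‖v‖ * ‖ρ‖ ≤ B v ρ) :
    ∀ ρ : W, ρ ≠ 0 →
      (C₀ / C) * ‖ρ‖ ≤ sSup {r : ℝ | ∃ v ∈ Set.range Pi, v ≠ 0 ∧ r = B v ρ / ‖v‖} := by
  intro ρ hρ
  obtain ⟨vt, hvt0, hvt⟩ := hinfsup ρ
  have hρpos : 0 < ‖ρ‖ := norm_pos_iff.mpr hρ
  have hvtpos : 0 < ‖vt‖ := norm_pos_iff.mpr hvt0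
  have hBpos : 0 < B vt ρ :=
    lt_of_lt_of_le (by positivity) hvt
  have hPivt : Pi vt ≠ 0 := by
    intro h
    have : B (Pi vt) ρ = 0 := by rw [h]; simp
    rw [hcomm] at this
    exact hBpos.ne' this
  have hPivtpos : 0 < ‖Pi vt‖ := norm_pos_iff.mpr hPivt
  -- the candidate element
  have hmem : B (Pi vt) ρ / ‖Pi vt‖ ∈
      {r : ℝ | ∃ v ∈ Set.range Pi, v ≠ 0 ∧ r = B v ρ / ‖v‖} :=
    ⟨Pi vt, ⟨vt, rfl⟩, hPivt, rfl⟩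
  have hbdd : BddAbove {r : ℝ | ∃ v ∈ Set.range Pi, v ≠ 0 ∧ r = B v ρ / ‖v‖} := by
    refine ⟨M * ‖ρ‖, ?_⟩
    rintro r ⟨v, -, hv0, rfl⟩
    have hvpos : 0 < ‖v‖ := norm_pos_iff.mpr hv0
    rw [div_le_iff₀ hvpos]
    calc B v ρ ≤ |B v ρ| := le_abs_self _
      _ ≤ M * ‖v‖ * ‖ρ‖ := hB v ρ
      _ = M * ‖ρ‖ * ‖v‖ := by ring
  refine le_trans ?_ (le_csSup hbdd hmem)
  rw [hcomm, div_mul_eq_mul_div, le_div_iff₀ hPivtpos]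
  calc C₀ * ‖ρ‖ / C * ‖Pi vt‖ ≤ C₀ * ‖ρ‖ / C * (C * ‖vt‖) := by
        apply mul_le_mul_of_nonneg_left (hPi vt) (by positivity)
    _ = C₀ * ‖vt‖ * ‖ρ‖ := by field_simp
    _ ≤ B vt ρ := hvt
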